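/- arXiv:1612.07760 — 5 statements merged into one kernel-verified Lean document; each statement's English description precedes it below -/
import Mathlib

section
/- Let G be a Lie algebra that splits as a direct sum of vector spaces G = G₊ ⊕ G₋, where G₊ and G₋ are Lie subalgebras, and let P₊, P₋ denote the linear projections onto G₊ and G₋ respectively. Define R := (P₊ − P₋)/2 and the R-bracket [a,b]_R := [R a, b] + [a, R b]. Then the bracket [·,·]_R is bilinear, antisymmetric, and satisfies the Jacobi identity, i.e. it defines a second Lie algebra structure on the underlying vector space of G. -/
/-!
Write `x₊ = P₊ x` and `x₋ = P₋ x`. Expanding `R = (P₊ − P₋)/2` and `x = x₊ + x₋`, the cross terms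
cancel and `[a, b]_R = [a₊, b₊] − [a₋, b₋]`. Since `G₊` and `G₋` are subalgebras, this says that
the linear bijection `x ↦ (x₊, −x₋)` of `G` onto `G₊ × G₋` carries `[·,·]_R` to the bracket of the
product Lie algebra (note `[−a₋, −b₋] = [a₋, b₋]`), so `[·,·]_R` is a Lie bracket.
-/

namespace LieAlgebra.Pullback

variable {K L M : Type*} [CommRing K] [AddCommGroup L] [Module K L]
  [LieRing M] [LieAlgebra K M] {e : L →ₗ[K] M} {Rb : L → L → L}

theorem smul_add_left (he : Function.Injective e) (h : ∀ a b, e (Rb a b) = ⁅e a, e b⁆)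
    (c : K) (a a' b : L) : Rb (c • a + a') b = c • Rb a b + Rb a' b :=
  he <| by simp only [h, map_add, map_smul, add_lie, smul_lie]

theorem smul_add_right (he : Function.Injective e) (h : ∀ a b, e (Rb a b) = ⁅e a, e b⁆)
    (c : K) (a b b' : L) : Rb a (c • b + b') = c • Rb a b + Rb a b' :=
  he <| by simp only [h, map_add, map_smul, lie_add, lie_smul]

theorem antisymm (he : Function.Injective e) (h : ∀ a b, e (Rb a b) = ⁅e a, e b⁆)
    (a b : L) : Rb a b = -Rb b a :=
  he <| by rw [map_neg, h, h, lie_skew]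

theorem jacobi (he : Function.Injective e) (h : ∀ a b, e (Rb a b) = ⁅e a, e b⁆)
    (a b c : L) : Rb a (Rb b c) + Rb b (Rb c a) + Rb c (Rb a b) = 0 :=
  he <| by simp only [map_add, h, lie_jacobi, map_zero]

end LieAlgebra.Pullback

theorem half_sub_lie_add_lie_half_sub {K L : Type*} [Field K] [NeZero (2 : K)] [LieRing L]
    [LieAlgebra K L] (a₁ a₂ b₁ b₂ : L) :
    ⁅(2⁻¹ : K) • (a₁ - a₂), b₁ + b₂⁆ + ⁅a₁ + a₂, (2⁻¹ : K) • (b₁ - b₂)⁆ =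
      ⁅a₁, b₁⁆ - ⁅a₂, b₂⁆ := by
  have h2 : (2⁻¹ : K) + 2⁻¹ = 1 := by rw [← two_mul, mul_inv_cancel₀ two_ne_zero]
  simp only [smul_lie, lie_smul, sub_lie, lie_sub, add_lie, lie_add]
  linear_combination (norm := module) h2 • (⁅a₁, b₁⁆ - ⁅a₂, b₂⁆)

namespace LinearMap

variable {K L : Type*} [CommRing K] [LieRing L] [LieAlgebra K L] {Gp Gn : LieSubalgebra K L}
  {Pp Pn : L →ₗ[K] L}

theorem injective_prod_neg_of_add_eq_self (hsum : ∀ x, Pp x + Pn x = x) :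
    Function.Injective (Pp.prod (-Pn)) := by
  intro x y hxy
  obtain ⟨hp, hn⟩ : Pp x = Pp y ∧ Pn x = Pn y := by simpa using hxy
  rw [← hsum x, ← hsum y, hp, hn]

theorem prod_neg_apply_lie_sub_lie (hmemp : ∀ x, Pp x ∈ Gp) (hmemn : ∀ x, Pn x ∈ Gn)
    (hsum : ∀ x, Pp x + Pn x = x) (hpp : ∀ x ∈ Gp, Pp x = x) (hnn : ∀ x ∈ Gn, Pn x = x)
    (a b : L) :
    Pp.prod (-Pn) (⁅Pp a, Pp b⁆ - ⁅Pn a, Pn b⁆) = ⁅Pp.prod (-Pn) a, Pp.prod (-Pn) b⁆ := by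
  have hp : Pp ⁅Pp a, Pp b⁆ = ⁅Pp a, Pp b⁆ := hpp _ (Gp.lie_mem (hmemp a) (hmemp b))
  have hn : Pn ⁅Pn a, Pn b⁆ = ⁅Pn a, Pn b⁆ := hnn _ (Gn.lie_mem (hmemn a) (hmemn b))
  have hpn : Pp ⁅Pn a, Pn b⁆ = 0 := add_eq_right.mp (hn ▸ hsum _)
  have hnp : Pn ⁅Pp a, Pp b⁆ = 0 := add_eq_left.mp (hp ▸ hsum _)
  simp [hp, hn, hpn, hnp]

end LinearMap

/-- If a Lie algebra `L` splits as a vector-space direct sum of two Lie subalgebras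
`G₊` and `G₋`, with projections `P₊`, `P₋`, then the `R`-bracket
`[a,b]_R := [R a, b] + [a, R b]` with `R = (P₊ − P₋)/2` is bilinear, antisymmetric
and satisfies the Jacobi identity, i.e. it defines a second Lie algebra structure. -/
theorem r_bracket_second_lie_structure {L : Type*} [LieRing L] [LieAlgebra ℝ L]
    (Gp Gn : LieSubalgebra ℝ L) (Pp Pn : L →ₗ[ℝ] L)
    (hmemp : ∀ x : L, Pp x ∈ Gp) (hmemn : ∀ x : L, Pn x ∈ Gn)
    (hsum : ∀ x : L, Pp x + Pn x = x)
    (hpp : ∀ x ∈ Gp, Pp x = x) (hnn : ∀ x ∈ Gn, Pn x = x)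
    (R : L → L) (hR : ∀ x, R x = (2⁻¹ : ℝ) • (Pp x - Pn x))
    (Rb : L → L → L) (hRb : ∀ a b, Rb a b = ⁅R a, b⁆ + ⁅a, R b⁆) :
    (∀ (c : ℝ) (a a' b : L), Rb (c • a + a') b = c • Rb a b + Rb a' b) ∧
    (∀ (c : ℝ) (a b b' : L), Rb a (c • b + b') = c • Rb a b + Rb a b') ∧
    (∀ a b : L, Rb a b = - Rb b a) ∧
    (∀ a b c : L, Rb a (Rb b c) + Rb b (Rb c a) + Rb c (Rb a b) = 0) := by
  have hRb_eq : ∀ a b, Rb a b = ⁅Pp a, Pp b⁆ - ⁅Pn a, Pn b⁆ := fun a b => by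
    simpa only [hRb, hR, hsum] using half_sub_lie_add_lie_half_sub (Pp a) (Pn a) (Pp b) (Pn b)
  have he : ∀ a b, Pp.prod (-Pn) (Rb a b) = ⁅Pp.prod (-Pn) a, Pp.prod (-Pn) b⁆ := fun a b => by
    rw [hRb_eq, LinearMap.prod_neg_apply_lie_sub_lie hmemp hmemn hsum hpp hnn]
  have hinj := LinearMap.injective_prod_neg_of_add_eq_self hsum
  exact ⟨LieAlgebra.Pullback.smul_add_left hinj he, LieAlgebra.Pullback.smul_add_right hinj he,
    LieAlgebra.Pullback.antisymm hinj he, LieAlgebra.Pullback.jacobi hinj he⟩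
end

section
/- For smooth functions u : ℝ² × ℝ → ℝ with coordinates (t,y,x), and λ ∈ ℝ a parameter, consider the vector fields A_t = ∂/∂t + (λ² + λ u_x − u_y) ∂/∂x and A_y = ∂/∂y + (λ + u_x) ∂/∂x acting on smooth functions of (t,y,x). Then the commutator [A_t, A_y] vanishes for all values of λ if and only if u satisfies the Mikhalev–Pavlov equation u_{xt} + u_{yy} = u_y u_{xx} − u_x u_{xy}. -/
/-- Partial derivative in `t` of a function of `(t, y, x)`. -/
noncomputable def pt (f : ℝ → ℝ → ℝ → ℝ) (t y x : ℝ) : ℝ := deriv (fun s => f s y x) t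
/-- Partial derivative in `y` of a function of `(t, y, x)`. -/
noncomputable def py (f : ℝ → ℝ → ℝ → ℝ) (t y x : ℝ) : ℝ := deriv (fun s => f t s x) y
/-- Partial derivative in `x` of a function of `(t, y, x)`. -/
noncomputable def px (f : ℝ → ℝ → ℝ → ℝ) (t y x : ℝ) : ℝ := deriv (fun s => f t y s) x

/-- The vector field `A_t = ∂/∂t + (λ² + λ u_x − u_y) ∂/∂x` acting on functions. -/
noncomputable def At (u : ℝ → ℝ → ℝ → ℝ) (lam : ℝ) (f : ℝ → ℝ → ℝ → ℝ) : ℝ → ℝ → ℝ → ℝ :=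
  fun t y x => pt f t y x + (lam ^ 2 + lam * px u t y x - py u t y x) * px f t y x

/-- The vector field `A_y = ∂/∂y + (λ + u_x) ∂/∂x` acting on functions. -/
noncomputable def Ay (u : ℝ → ℝ → ℝ → ℝ) (lam : ℝ) (f : ℝ → ℝ → ℝ → ℝ) : ℝ → ℝ → ℝ → ℝ :=
  fun t y x => py f t y x + (lam + px u t y x) * px f t y x

namespace MPaux

/-- Uncurried version. -/
noncomputable def Fu (f : ℝ → ℝ → ℝ → ℝ) : ℝ × ℝ × ℝ → ℝ := fun p => f p.1 p.2.1 p.2.2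

/-- Smoothness predicate. -/
def Sm (f : ℝ → ℝ → ℝ → ℝ) : Prop := ContDiff ℝ (⊤ : ℕ∞) (Fu f)

local notation "et" => ((1, 0, 0) : ℝ × ℝ × ℝ)
local notation "ey" => ((0, 1, 0) : ℝ × ℝ × ℝ)
local notation "ex" => ((0, 0, 1) : ℝ × ℝ × ℝ)

lemma hda_t {f : ℝ → ℝ → ℝ → ℝ} (hf : Sm f) (t y x : ℝ) :
    HasDerivAt (fun s => f s y x) (fderiv ℝ (Fu f) (t, y, x) et) t := by
  have h1 : HasFDerivAt (Fu f) (fderiv ℝ (Fu f) (t, y, x)) (t, y, x) :=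
    (hf.differentiable (by simp) (t, y, x)).hasFDerivAt
  exact h1.comp_hasDerivAt t
    (HasDerivAt.prodMk (hasDerivAt_id t) (HasDerivAt.prodMk (hasDerivAt_const t y) (hasDerivAt_const t x)))

lemma hda_y {f : ℝ → ℝ → ℝ → ℝ} (hf : Sm f) (t y x : ℝ) :
    HasDerivAt (fun s => f t s x) (fderiv ℝ (Fu f) (t, y, x) ey) y := by
  have h1 : HasFDerivAt (Fu f) (fderiv ℝ (Fu f) (t, y, x)) (t, y, x) :=
    (hf.differentiable (by simp) (t, y, x)).hasFDerivAt
  exact h1.comp_hasDerivAt y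
    (HasDerivAt.prodMk (hasDerivAt_const y t) (HasDerivAt.prodMk (hasDerivAt_id y) (hasDerivAt_const y x)))

lemma hda_x {f : ℝ → ℝ → ℝ → ℝ} (hf : Sm f) (t y x : ℝ) :
    HasDerivAt (fun s => f t y s) (fderiv ℝ (Fu f) (t, y, x) ex) x := by
  have h1 : HasFDerivAt (Fu f) (fderiv ℝ (Fu f) (t, y, x)) (t, y, x) :=
    (hf.differentiable (by simp) (t, y, x)).hasFDerivAt
  exact h1.comp_hasDerivAt x
    (HasDerivAt.prodMk (hasDerivAt_const x t) (HasDerivAt.prodMk (hasDerivAt_const x y) (hasDerivAt_id x)))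

lemma pt_eq {f : ℝ → ℝ → ℝ → ℝ} (hf : Sm f) (t y x : ℝ) :
    pt f t y x = fderiv ℝ (Fu f) (t, y, x) et := (hda_t hf t y x).deriv

lemma py_eq {f : ℝ → ℝ → ℝ → ℝ} (hf : Sm f) (t y x : ℝ) :
    py f t y x = fderiv ℝ (Fu f) (t, y, x) ey := (hda_y hf t y x).deriv

lemma px_eq {f : ℝ → ℝ → ℝ → ℝ} (hf : Sm f) (t y x : ℝ) :
    px f t y x = fderiv ℝ (Fu f) (t, y, x) ex := (hda_x hf t y x).deriv

lemma hda_pt {f : ℝ → ℝ → ℝ → ℝ} (hf : Sm f) (t y x : ℝ) :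
    HasDerivAt (fun s => f s y x) (pt f t y x) t := by
  rw [pt_eq hf]; exact hda_t hf t y x

lemma hda_py {f : ℝ → ℝ → ℝ → ℝ} (hf : Sm f) (t y x : ℝ) :
    HasDerivAt (fun s => f t s x) (py f t y x) y := by
  rw [py_eq hf]; exact hda_y hf t y x

lemma hda_px {f : ℝ → ℝ → ℝ → ℝ} (hf : Sm f) (t y x : ℝ) :
    HasDerivAt (fun s => f t y s) (px f t y x) x := by
  rw [px_eq hf]; exact hda_x hf t y x

lemma smooth_fderiv_apply {f : ℝ → ℝ → ℝ → ℝ} (hf : Sm f) (v : ℝ × ℝ × ℝ) :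
    ContDiff ℝ (⊤ : ℕ∞) (fun p : ℝ × ℝ × ℝ => fderiv ℝ (Fu f) p v) :=
  (hf.fderiv_right (le_refl _)).clm_apply contDiff_const

lemma Sm_pt {f : ℝ → ℝ → ℝ → ℝ} (hf : Sm f) : Sm (pt f) := by
  have : Fu (pt f) = fun p : ℝ × ℝ × ℝ => fderiv ℝ (Fu f) p et := by
    funext p; exact pt_eq hf p.1 p.2.1 p.2.2
  rw [Sm, this]; exact smooth_fderiv_apply hf _

lemma Sm_py {f : ℝ → ℝ → ℝ → ℝ} (hf : Sm f) : Sm (py f) := by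
  have : Fu (py f) = fun p : ℝ × ℝ × ℝ => fderiv ℝ (Fu f) p ey := by
    funext p; exact py_eq hf p.1 p.2.1 p.2.2
  rw [Sm, this]; exact smooth_fderiv_apply hf _

lemma Sm_px {f : ℝ → ℝ → ℝ → ℝ} (hf : Sm f) : Sm (px f) := by
  have : Fu (px f) = fun p : ℝ × ℝ × ℝ => fderiv ℝ (Fu f) p ex := by
    funext p; exact px_eq hf p.1 p.2.1 p.2.2
  rw [Sm, this]; exact smooth_fderiv_apply hf _

/-- Mixed partial via second fderiv. -/
lemma mixed_eq {f : ℝ → ℝ → ℝ → ℝ} (hf : Sm f) (v w : ℝ × ℝ × ℝ) (p : ℝ × ℝ × ℝ) :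
    fderiv ℝ (fun q : ℝ × ℝ × ℝ => fderiv ℝ (Fu f) q v) p w =
      fderiv ℝ (fderiv ℝ (Fu f)) p w v := by
  rw [fderiv_clm_apply ((hf.fderiv_right (m := (⊤ : ℕ∞)) (le_refl _)).differentiable (by simp) p)
    (differentiableAt_const v)]
  simp

lemma symm2 {f : ℝ → ℝ → ℝ → ℝ} (hf : Sm f) (v w : ℝ × ℝ × ℝ) (p : ℝ × ℝ × ℝ) :
    fderiv ℝ (fun q : ℝ × ℝ × ℝ => fderiv ℝ (Fu f) q v) p w =
      fderiv ℝ (fun q : ℝ × ℝ × ℝ => fderiv ℝ (Fu f) q w) p v := by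
  rw [mixed_eq hf, mixed_eq hf]
  exact (hf.contDiffAt.isSymmSndFDerivAt (by rw [minSmoothness_of_isRCLikeNormedField]; exact WithTop.coe_le_coe.mpr (le_top : (2 : ℕ∞) ≤ ⊤))) w v

/-- Generic mixed-partial symmetry. -/
lemma mixed_symm {f : ℝ → ℝ → ℝ → ℝ} (hf : Sm f)
    {g h : ℝ → ℝ → ℝ → ℝ} (hg : Sm g) (hh : Sm h) {v w : ℝ × ℝ × ℝ}
    (hgf : ∀ p : ℝ × ℝ × ℝ, Fu g p = fderiv ℝ (Fu f) p v)
    (hhf : ∀ p : ℝ × ℝ × ℝ, Fu h p = fderiv ℝ (Fu f) p w)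
    (D1 D2 : (ℝ → ℝ → ℝ → ℝ) → ℝ → ℝ → ℝ → ℝ)
    (hD1 : ∀ k, Sm k → ∀ t y x : ℝ, D1 k t y x = fderiv ℝ (Fu k) (t, y, x) w)
    (hD2 : ∀ k, Sm k → ∀ t y x : ℝ, D2 k t y x = fderiv ℝ (Fu k) (t, y, x) v)
    (t y x : ℝ) : D1 g t y x = D2 h t y x := by
  rw [hD1 g hg, hD2 h hh]
  have e1 : Fu g = fun p => fderiv ℝ (Fu f) p v := funext hgf
  have e2 : Fu h = fun p => fderiv ℝ (Fu f) p w := funext hhf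
  rw [e1, e2]
  exact symm2 hf v w (t, y, x)

lemma px_pt {f : ℝ → ℝ → ℝ → ℝ} (hf : Sm f) (t y x : ℝ) :
    px (pt f) t y x = pt (px f) t y x :=
  mixed_symm hf (Sm_pt hf) (Sm_px hf)
    (fun p => pt_eq hf p.1 p.2.1 p.2.2) (fun p => px_eq hf p.1 p.2.1 p.2.2)
    px pt (fun k hk => px_eq hk) (fun k hk => pt_eq hk) t y x

lemma py_pt {f : ℝ → ℝ → ℝ → ℝ} (hf : Sm f) (t y x : ℝ) :
    py (pt f) t y x = pt (py f) t y x :=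
  mixed_symm hf (Sm_pt hf) (Sm_py hf)
    (fun p => pt_eq hf p.1 p.2.1 p.2.2) (fun p => py_eq hf p.1 p.2.1 p.2.2)
    py pt (fun k hk => py_eq hk) (fun k hk => pt_eq hk) t y x

lemma px_py {f : ℝ → ℝ → ℝ → ℝ} (hf : Sm f) (t y x : ℝ) :
    px (py f) t y x = py (px f) t y x :=
  mixed_symm hf (Sm_py hf) (Sm_px hf)
    (fun p => py_eq hf p.1 p.2.1 p.2.2) (fun p => px_eq hf p.1 p.2.1 p.2.2)
    px py (fun k hk => px_eq hk) (fun k hk => py_eq hk) t y x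

/-- Key expansion of the commutator. -/
lemma comm_eq (u ψ : ℝ → ℝ → ℝ → ℝ) (hu : Sm u) (hψ : Sm ψ) (lam t y x : ℝ) :
    At u lam (Ay u lam ψ) t y x - Ay u lam (At u lam ψ) t y x =
      (px (pt u) t y x + py (py u) t y x -
        (py u t y x * px (px u) t y x - px u t y x * px (py u) t y x)) * px ψ t y x := by
  have hpxu := Sm_px hu; have hpyu := Sm_py hu
  have hpxψ := Sm_px hψ; have hpyψ := Sm_py hψ; have hptψ := Sm_pt hψ
  -- pt (Ay u lam ψ)
  have e1 : pt (Ay u lam ψ) t y x =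
      pt (py ψ) t y x + (pt (px u) t y x * px ψ t y x
        + (lam + px u t y x) * pt (px ψ) t y x) := by
    have : HasDerivAt (fun s => Ay u lam ψ s y x)
        (pt (py ψ) t y x + (pt (px u) t y x * px ψ t y x
          + (lam + px u t y x) * pt (px ψ) t y x)) t := by
      have h1 := hda_pt hpyψ t y x
      have h2 := (hda_pt hpxu t y x).const_add lam
      have h3 := hda_pt hpxψ t y x
      have := h1.add (h2.mul h3)
      simpa [Ay, zero_add, Pi.add_def, Pi.mul_def] using this
    exact this.deriv
  -- px (Ay u lam ψ)
  have e2 : px (Ay u lam ψ) t y x =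
      px (py ψ) t y x + (px (px u) t y x * px ψ t y x
        + (lam + px u t y x) * px (px ψ) t y x) := by
    have : HasDerivAt (fun s => Ay u lam ψ t y s)
        (px (py ψ) t y x + (px (px u) t y x * px ψ t y x
          + (lam + px u t y x) * px (px ψ) t y x)) x := by
      have h1 := hda_px hpyψ t y x
      have h2 := (hda_px hpxu t y x).const_add lam
      have h3 := hda_px hpxψ t y x
      have := h1.add (h2.mul h3)
      simpa [Ay, zero_add, Pi.add_def, Pi.mul_def] using this
    exact this.deriv
  -- py (At u lam ψ)
  have e3 : py (At u lam ψ) t y x =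
      py (pt ψ) t y x + ((lam * py (px u) t y x - py (py u) t y x) * px ψ t y x
        + (lam ^ 2 + lam * px u t y x - py u t y x) * py (px ψ) t y x) := by
    have : HasDerivAt (fun s => At u lam ψ t s x)
        (py (pt ψ) t y x + ((lam * py (px u) t y x - py (py u) t y x) * px ψ t y x
          + (lam ^ 2 + lam * px u t y x - py u t y x) * py (px ψ) t y x)) y := by
      have h1 := hda_py hptψ t y x
      have h2 : HasDerivAt (fun s => lam ^ 2 + lam * px u t s x - py u t s x)
          (lam * py (px u) t y x - py (py u) t y x) y :=
        (((hda_py hpxu t y x).const_mul lam).const_add (lam ^ 2)).sub (hda_py hpyu t y x)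
      have h3 := hda_py hpxψ t y x
      have := h1.add (h2.mul h3)
      simpa [At, zero_add, Pi.add_def, Pi.mul_def] using this
    exact this.deriv
  -- px (At u lam ψ)
  have e4 : px (At u lam ψ) t y x =
      px (pt ψ) t y x + ((lam * px (px u) t y x - px (py u) t y x) * px ψ t y x
        + (lam ^ 2 + lam * px u t y x - py u t y x) * px (px ψ) t y x) := by
    have : HasDerivAt (fun s => At u lam ψ t y s)
        (px (pt ψ) t y x + ((lam * px (px u) t y x - px (py u) t y x) * px ψ t y x
          + (lam ^ 2 + lam * px u t y x - py u t y x) * px (px ψ) t y x)) x := by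
      have h1 := hda_px hptψ t y x
      have h2 : HasDerivAt (fun s => lam ^ 2 + lam * px u t y s - py u t y s)
          (lam * px (px u) t y x - px (py u) t y x) x :=
        (((hda_px hpxu t y x).const_mul lam).const_add (lam ^ 2)).sub (hda_px hpyu t y x)
      have h3 := hda_px hpxψ t y x
      have := h1.add (h2.mul h3)
      simpa [At, zero_add, Pi.add_def, Pi.mul_def] using this
    exact this.deriv
  show pt (Ay u lam ψ) t y x + (lam ^ 2 + lam * px u t y x - py u t y x) * px (Ay u lam ψ) t y x
      - (py (At u lam ψ) t y x + (lam + px u t y x) * px (At u lam ψ) t y x) = _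
  rw [e1, e2, e3, e4, px_pt hψ t y x, py_pt hψ t y x, px_py hψ t y x, px_pt hu t y x,
    px_py hu t y x]
  ring

end MPaux

open MPaux in
/-- The commutator `[A_t, A_y]` vanishes for all `λ` iff `u` satisfies the
Mikhalev–Pavlov equation `u_{xt} + u_{yy} = u_y u_{xx} − u_x u_{xy}`. -/
theorem mikhalev_pavlov_lax (u : ℝ → ℝ → ℝ → ℝ)
    (hu : ContDiff ℝ (⊤ : ℕ∞) (fun p : ℝ × ℝ × ℝ => u p.1 p.2.1 p.2.2)) :
    (∀ (lam : ℝ) (ψ : ℝ → ℝ → ℝ → ℝ),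
        ContDiff ℝ (⊤ : ℕ∞) (fun p : ℝ × ℝ × ℝ => ψ p.1 p.2.1 p.2.2) →
        ∀ t y x : ℝ, At u lam (Ay u lam ψ) t y x = Ay u lam (At u lam ψ) t y x)
      ↔ (∀ t y x : ℝ,
          px (pt u) t y x + py (py u) t y x =
            py u t y x * px (px u) t y x - px u t y x * px (py u) t y x) := by
  have hu' : Sm u := hu
  constructor
  · intro h t y x
    set ψ : ℝ → ℝ → ℝ → ℝ := fun _ _ x => x with hψdef
    have hψ : Sm ψ := by
      have : Fu ψ = fun p : ℝ × ℝ × ℝ => p.2.2 := rfl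
      rw [Sm, this]; exact (contDiff_snd.comp contDiff_snd)
    have hpx : px ψ t y x = 1 := by
      simp [px, hψdef]
    have := comm_eq u ψ hu' hψ 0 t y x
    rw [h 0 ψ hψ t y x, sub_self, hpx, mul_one] at this
    linarith [this.symm]
  · intro h lam ψ hψ t y x
    have := comm_eq u ψ hu' hψ lam t y x
    have hz : px (pt u) t y x + py (py u) t y x -
        (py u t y x * px (px u) t y x - px u t y x * px (py u) t y x) = 0 := by
      rw [h t y x]; ring
    rw [hz, zero_mul] at this
    linarith [this]
end

section
/- Let G be a finite-dimensional Lie algebra with dual G*, and let f, g : G* → ℝ be differentiable functions that are Casimir functions at a point l ∈ G*, i.e. ad*_{∇f(l)} l = 0 and ad*_{∇g(l)} l = 0, where ∇f(l) ∈ G is the gradient defined by Df(l)(ξ) = ⟨ξ, ∇f(l)⟩. Let R : G → G be any linear map and define the R-bracket {f,g}_R(l) := ⟨l, [R∇f(l), ∇g(l)] + [∇f(l), R∇g(l)]⟩. Then {f,g}_R(l) = 0; in particular Casimir functions commute with respect to every R-deformed Lie–Poisson bracket. -/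
theorem map_lie_eq_zero_of_map_lie_left_eq_zero {L M F : Type*} [LieRing L] [AddCommGroup M]
    [FunLike F L M] [AddMonoidHomClass F L M] (l : F) {x : L} (hx : ∀ y : L, l ⁅x, y⁆ = 0)
    (y : L) : l ⁅y, x⁆ = 0 := by
  rw [← lie_skew, map_neg, hx, neg_zero]

theorem casimirs_commute_R_bracket_general
    {G : Type*} [LieRing G] [LieAlgebra ℝ G]
    (l : Module.Dual ℝ G) (gradf gradg : G)
    (hf : ∀ X : G, l ⁅gradf, X⁆ = 0)
    (hg : ∀ X : G, l ⁅gradg, X⁆ = 0)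
    (R : G →ₗ[ℝ] G) :
    l (⁅R gradf, gradg⁆ + ⁅gradf, R gradg⁆) = 0 := by
  rw [map_add, map_lie_eq_zero_of_map_lie_left_eq_zero l hg, hf, add_zero]

/-- Casimir functions commute with respect to every `R`-deformed Lie–Poisson bracket:
if `∇f(l)`, `∇g(l)` are the gradients of `f`, `g` at `l ∈ G*` (in the Gateaux sense
`D f(l)(ξ) = ⟨ξ, ∇f(l)⟩`) and `ad*_{∇f(l)} l = 0 = ad*_{∇g(l)} l`, then for any linear
map `R : G → G` one has `{f,g}_R(l) = ⟨l, [R∇f(l), ∇g(l)] + [∇f(l), R∇g(l)]⟩ = 0`. -/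
theorem casimirs_commute_R_bracket
    {G : Type*} [LieRing G] [LieAlgebra ℝ G] [FiniteDimensional ℝ G]
    (f g : Module.Dual ℝ G → ℝ) (l : Module.Dual ℝ G) (gradf gradg : G)
    (hgradf : ∀ ξ : Module.Dual ℝ G, HasDerivAt (fun s : ℝ => f (l + s • ξ)) (ξ gradf) 0)
    (hgradg : ∀ ξ : Module.Dual ℝ G, HasDerivAt (fun s : ℝ => g (l + s • ξ)) (ξ gradg) 0)
    (hf : ∀ X : G, l ⁅gradf, X⁆ = 0)
    (hg : ∀ X : G, l ⁅gradg, X⁆ = 0)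
    (R : G →ₗ[ℝ] G) :
    l (⁅R gradf, gradg⁆ + ⁅gradf, R gradg⁆) = 0 :=
  casimirs_commute_R_bracket_general l gradf gradg hf hg R
end

section
/- Let K : ℝ × ℝⁿ → ℝⁿ be a smooth time-dependent vector field with flow φ_t (i.e. ∂φ_t(x₀)/∂t = K(t, φ_t(x₀)), φ_0 = id), and let l : ℝ × ℝⁿ → ℝⁿ be a smooth covector-valued function satisfying the transport equation ∂l/∂t + (K·∇)l + (∇K)ᵀ l + (div K) l = 0 (componentwise: ∂lᵢ/∂t + Σⱼ Kⱼ ∂lᵢ/∂xⱼ + Σⱼ lⱼ ∂Kⱼ/∂xᵢ + lᵢ Σⱼ ∂Kⱼ/∂xⱼ = 0). Then for every fixed x₀ and every constant vector δ ∈ ℝⁿ, the quantity ⟨l(t, φ_t(x₀)), Dφ_t(x₀) δ⟩ · det(Dφ_t(x₀)) is constant in t. -/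
open scoped BigOperators

section Aux

open ContinuousLinearMap

lemma partial_fderiv_snd {n : ℕ} {F : Type*} [NormedAddCommGroup F] [NormedSpace ℝ F]
    {f : ℝ × (Fin n → ℝ) → F} {t : ℝ} {x : Fin n → ℝ}
    (hf : DifferentiableAt ℝ f (t, x)) :
    HasFDerivAt (fun w => f (t, w)) ((fderiv ℝ f (t, x)).comp (inr ℝ ℝ (Fin n → ℝ))) x :=
  hf.hasFDerivAt.comp x (hasFDerivAt_prodMk_right t x)

lemma partial_deriv_fst {n : ℕ} {F : Type*} [NormedAddCommGroup F] [NormedSpace ℝ F]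
    {f : ℝ × (Fin n → ℝ) → F} {t : ℝ} {x : Fin n → ℝ}
    (hf : DifferentiableAt ℝ f (t, x)) :
    HasDerivAt (fun s => f (s, x)) (fderiv ℝ f (t, x) (1, 0)) t :=
  hf.hasFDerivAt.comp_hasDerivAt t ((hasDerivAt_id t).prodMk (hasDerivAt_const t x))

lemma fderiv_proj {n m : ℕ} {f : (Fin n → ℝ) → (Fin m → ℝ)} {x : Fin n → ℝ}
    (hf : DifferentiableAt ℝ f x) (i : Fin m) (v : Fin n → ℝ) :
    fderiv ℝ (fun w => f w i) x v = fderiv ℝ f x v i := by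
  have h0 := ((proj (R := ℝ) (φ := fun _ : Fin m => ℝ) i).hasFDerivAt
      (x := f x)).comp x hf.hasFDerivAt
  have h : HasFDerivAt (fun w => f w i)
      ((proj (R := ℝ) (φ := fun _ : Fin m => ℝ) i).comp (fderiv ℝ f x)) x := h0
  rw [h.fderiv]; rfl

lemma clm_apply_eq_sum {n : ℕ} (T : (Fin n → ℝ) →L[ℝ] (Fin n → ℝ)) (w : Fin n → ℝ) (i : Fin n) :
    T w i = ∑ k, w k * T (Pi.single k 1) i := by
  have hw : w = ∑ k, w k • (Pi.single k 1 : Fin n → ℝ) := by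
    conv_lhs => rw [pi_eq_sum_univ w]
    refine Finset.sum_congr rfl fun k _ => ?_
    congr 1; ext j; simp [Pi.single_apply, eq_comm]
  conv_lhs => rw [hw]
  rw [map_sum]
  simp [Finset.sum_apply]

end Aux

section Det
open Matrix

lemma det_updateColumn_expand {n : ℕ} (A : Matrix (Fin n) (Fin n) ℝ) (i : Fin n)
    (v : Fin n → ℝ) :
    (A.updateCol i v).det
      = ∑ σ : Equiv.Perm (Fin n),
          (Equiv.Perm.sign σ : ℝ) * (v (σ i) * ∏ j ∈ Finset.univ.erase i, A (σ j) j) := by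
  rw [Matrix.det_apply']
  refine Finset.sum_congr rfl fun σ _ => ?_
  congr 1
  rw [← Finset.mul_prod_erase Finset.univ _ (Finset.mem_univ i)]
  congr 1
  · simp [Matrix.updateCol_apply]
  · exact Finset.prod_congr rfl fun j hj => by
      simp [Matrix.updateCol_apply, Finset.ne_of_mem_erase hj]

lemma hasDerivAt_det {n : ℕ} (M : ℝ → Matrix (Fin n) (Fin n) ℝ)
    (M' : Matrix (Fin n) (Fin n) ℝ) (t : ℝ)
    (h : ∀ i j, HasDerivAt (fun s => M s i j) (M' i j) t) :
    HasDerivAt (fun s => (M s).det)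
      (∑ i, ((M t).updateCol i (fun r => M' r i)).det) t := by
  have H : ∀ σ : Equiv.Perm (Fin n),
      HasDerivAt (fun s => (Equiv.Perm.sign σ : ℝ) * ∏ i, M s (σ i) i)
        ((Equiv.Perm.sign σ : ℝ) * ∑ i, (∏ j ∈ Finset.univ.erase i, M t (σ j) j) * M' (σ i) i) t := by
    intro σ
    have := (HasDerivAt.finset_prod (u := Finset.univ)
      (f := fun i s => M s (σ i) i) (f' := fun i => M' (σ i) i)
      (fun i _ => h (σ i) i)).const_mul ((Equiv.Perm.sign σ : ℝ))
    simpa [smul_eq_mul] using this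
  have key : (∑ i, ((M t).updateCol i fun r => M' r i).det)
      = ∑ σ : Equiv.Perm (Fin n), (Equiv.Perm.sign σ : ℝ)
          * ∑ i, (∏ j ∈ Finset.univ.erase i, M t (σ j) j) * M' (σ i) i := by
    simp only [det_updateColumn_expand]
    rw [Finset.sum_comm]
    refine Finset.sum_congr rfl fun σ _ => ?_
    rw [Finset.mul_sum]
    exact Finset.sum_congr rfl fun i _ => by ring
  rw [key]
  have := HasDerivAt.fun_sum (fun σ (_ : σ ∈ Finset.univ) => H σ)
  simpa only [← Matrix.det_apply'] using this

lemma sum_det_updateColumn_mul {n : ℕ} (A Bm : Matrix (Fin n) (Fin n) ℝ) :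
    ∑ i, (A.updateCol i (fun r => (Bm * A) r i)).det = Matrix.trace Bm * A.det := by
  have h1 : ∀ i : Fin n, (A.updateCol i (fun r => (Bm * A) r i)).det
      = (A.adjugate * (Bm * A)) i i := by
    intro i
    rw [← Matrix.cramer_apply, Matrix.cramer_eq_adjugate_mulVec]
    simp [Matrix.mulVec, Matrix.mul_apply, dotProduct]
  simp only [h1]
  have : ∑ i, (A.adjugate * (Bm * A)) i i = Matrix.trace (A.adjugate * (Bm * A)) := rfl
  rw [this, ← Matrix.mul_assoc, Matrix.trace_mul_comm, ← Matrix.mul_assoc,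
    Matrix.mul_adjugate, Matrix.smul_mul, Matrix.one_mul, Matrix.trace_smul]
  simp [mul_comm]

end Det

open ContinuousLinearMap


set_option maxHeartbeats 1000000 in
/-- If the covector field `l` satisfies the transport equation
`∂l/∂t + (K·∇)l + (∇K)ᵀ l + (div K) l = 0` along the flow `φ_t` of `K`, then
`⟨l(t, φ_t(x₀)), Dφ_t(x₀) δ⟩ · det(Dφ_t(x₀))` is constant in `t`. -/
theorem transport_equation_invariant {n : ℕ}
    (K : ℝ → (Fin n → ℝ) → (Fin n → ℝ))
    (φ : ℝ → (Fin n → ℝ) → (Fin n → ℝ))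
    (l : ℝ → (Fin n → ℝ) → (Fin n → ℝ))
    (hK : ContDiff ℝ (⊤ : ℕ∞) (fun p : ℝ × (Fin n → ℝ) => K p.1 p.2))
    (hφ : ContDiff ℝ 1 (fun p : ℝ × (Fin n → ℝ) => φ p.1 p.2))
    (hl : ContDiff ℝ 1 (fun p : ℝ × (Fin n → ℝ) => l p.1 p.2))
    (hflow : ∀ (x0 : Fin n → ℝ) (t : ℝ), HasDerivAt (fun s => φ s x0) (K t (φ t x0)) t)
    (hφ0 : ∀ x, φ 0 x = x)
    (htrans : ∀ (t : ℝ) (x : Fin n → ℝ) (i : Fin n),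
      deriv (fun s => l s x i) t
        + ∑ j, K t x j * fderiv ℝ (fun w => l t w i) x (Pi.single j 1)
        + ∑ j, l t x j * fderiv ℝ (fun w => K t w j) x (Pi.single i 1)
        + l t x i * ∑ j, fderiv ℝ (fun w => K t w j) x (Pi.single j 1) = 0) :
    ∀ (x0 δ : Fin n → ℝ) (t1 t2 : ℝ),
      (∑ i, l t1 (φ t1 x0) i * fderiv ℝ (fun w => φ t1 w) x0 δ i)
          * LinearMap.det (fderiv ℝ (fun w => φ t1 w) x0).toLinearMap
        = (∑ i, l t2 (φ t2 x0) i * fderiv ℝ (fun w => φ t2 w) x0 δ i)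
            * LinearMap.det (fderiv ℝ (fun w => φ t2 w) x0).toLinearMap := by
  intro x0 δ t1 t2
  have hKj : ContDiff ℝ 1 (fun p : ℝ × (Fin n → ℝ) => K p.1 p.2) := hK.of_le (by simp)
  have hgj : ContDiff ℝ 1 (fun p : ℝ × (Fin n → ℝ) => K p.1 (φ p.1 p.2)) := by
    have : (fun p : ℝ × (Fin n → ℝ) => K p.1 (φ p.1 p.2))
        = (fun p : ℝ × (Fin n → ℝ) => K p.1 p.2) ∘ (fun p : ℝ × (Fin n → ℝ) => (p.1, φ p.1 p.2)) :=
      rfl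
    rw [this]
    exact hKj.comp (contDiff_fst.prodMk hφ)
  have hgd : Differentiable ℝ (fun p : ℝ × (Fin n → ℝ) => K p.1 (φ p.1 p.2)) :=
    hgj.differentiable one_ne_zero
  -- representation
  have hrep : ∀ (x : Fin n → ℝ) (t : ℝ), φ t x = x + ∫ s in (0:ℝ)..t, K s (φ s x) := by
    intro x t
    have hgc : Continuous fun s => K s (φ s x) :=
      hgj.continuous.comp (continuous_id.prodMk continuous_const)
    have hF : ∀ u : ℝ, HasDerivAt (fun v => ∫ s in (0:ℝ)..v, K s (φ s x)) (K u (φ u x)) u :=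
      fun u => (hgc.integral_hasStrictDerivAt 0 u).hasDerivAt
    have hψ : ∀ u : ℝ, HasDerivAt
        (fun v => φ v x - ∫ s in (0:ℝ)..v, K s (φ s x)) 0 u := by
      intro u; simpa using (hflow x u).fun_sub (hF u)
    have hconst := is_const_of_deriv_eq_zero (fun u => (hψ u).differentiableAt)
      (fun u => (hψ u).deriv) t 0
    simp only [intervalIntegral.integral_same, sub_zero, hφ0] at hconst
    exact sub_eq_iff_eq_add.mp hconst
  -- partial x-derivative of g, continuity
  have hBgcont : Continuous (fun p : ℝ × (Fin n → ℝ) =>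
      (fderiv ℝ (fun q : ℝ × (Fin n → ℝ) => K q.1 (φ q.1 q.2)) p).comp
        (inr ℝ ℝ (Fin n → ℝ))) :=
    (hgj.continuous_fderiv one_ne_zero).clm_comp continuous_const
  set Bg : ℝ → (Fin n → ℝ) →L[ℝ] (Fin n → ℝ) := fun s =>
    (fderiv ℝ (fun q : ℝ × (Fin n → ℝ) => K q.1 (φ q.1 q.2)) (s, x0)).comp
      (inr ℝ ℝ (Fin n → ℝ)) with hBgdef
  have hBgc : Continuous Bg := hBgcont.comp (continuous_id.prodMk continuous_const)
  have hintC : ∀ t : ℝ, HasFDerivAt (fun x => ∫ s in (0:ℝ)..t, K s (φ s x))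
      (∫ s in (0:ℝ)..t, Bg s) x0 := by
    intro t
    obtain ⟨C, hC⟩ := ((isCompact_uIcc (a := (0:ℝ)) (b := t)).prod
      (isCompact_closedBall x0 1)).exists_bound_of_continuousOn hBgcont.continuousOn
    have h1 : ∀ᶠ x in nhds x0, MeasureTheory.AEStronglyMeasurable
        (fun s => K s (φ s x)) (MeasureTheory.volume.restrict (Set.uIoc (0:ℝ) t)) :=
      Filter.Eventually.of_forall fun x =>
        ((hgj.continuous.comp (continuous_id.prodMk continuous_const)).aestronglyMeasurable)
    have h2 : IntervalIntegrable (fun s => K s (φ s x0)) MeasureTheory.volume 0 t :=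
      (hgj.continuous.comp (continuous_id.prodMk continuous_const)).intervalIntegrable _ _
    have h3 : MeasureTheory.AEStronglyMeasurable Bg
        (MeasureTheory.volume.restrict (Set.uIoc (0:ℝ) t)) := hBgc.aestronglyMeasurable
    have h4 : ∀ᵐ s ∂MeasureTheory.volume, s ∈ Set.uIoc (0:ℝ) t →
        ∀ x ∈ Metric.ball x0 1,
          ‖(fderiv ℝ (fun q : ℝ × (Fin n → ℝ) => K q.1 (φ q.1 q.2)) (s, x)).comp
            (inr ℝ ℝ (Fin n → ℝ))‖ ≤ C :=
      Filter.Eventually.of_forall fun s hs x hx =>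
        hC (s, x) ⟨Set.uIoc_subset_uIcc hs, Metric.ball_subset_closedBall hx⟩
    have h5 : IntervalIntegrable (fun _ : ℝ => C) MeasureTheory.volume 0 t :=
      intervalIntegrable_const
    have h6 : ∀ᵐ s ∂MeasureTheory.volume, s ∈ Set.uIoc (0:ℝ) t →
        ∀ x ∈ Metric.ball x0 1, HasFDerivAt (fun y => K s (φ s y))
          ((fderiv ℝ (fun q : ℝ × (Fin n → ℝ) => K q.1 (φ q.1 q.2)) (s, x)).comp
            (inr ℝ ℝ (Fin n → ℝ))) x :=
      Filter.Eventually.of_forall fun s _ x _ => partial_fderiv_snd (hgd (s, x))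
    exact intervalIntegral.hasFDerivAt_integral_of_dominated_of_fderiv_le
      (𝕜 := ℝ) (F := fun x s => K s (φ s x))
      (F' := fun x s => (fderiv ℝ (fun q : ℝ × (Fin n → ℝ) => K q.1 (φ q.1 q.2)) (s, x)).comp
        (inr ℝ ℝ (Fin n → ℝ)))
      (bound := fun _ => C) (Metric.ball_mem_nhds x0 one_pos) h1 h2 h3 h4 h5 h6
  have hA : ∀ t : ℝ, HasFDerivAt (fun w => φ t w)
      (ContinuousLinearMap.id ℝ (Fin n → ℝ) + ∫ s in (0:ℝ)..t, Bg s) x0 := by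
    intro t
    have h1 : (fun w => φ t w) = fun w => w + ∫ s in (0:ℝ)..t, K s (φ s w) :=
      funext fun w => hrep w t
    rw [h1]
    exact (hasFDerivAt_id x0).add (hintC t)
  have hAeq : ∀ t : ℝ, fderiv ℝ (fun w => φ t w) x0
      = ContinuousLinearMap.id ℝ (Fin n → ℝ) + ∫ s in (0:ℝ)..t, Bg s :=
    fun t => (hA t).fderiv
  have hAderiv : ∀ t : ℝ, HasDerivAt (fun s => fderiv ℝ (fun w => φ s w) x0) (Bg t) t := by
    intro t
    have h2 : HasDerivAt (fun u => ContinuousLinearMap.id ℝ (Fin n → ℝ)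
        + ∫ s in (0:ℝ)..u, Bg s) (Bg t) t := by
      simpa using (hasDerivAt_const t (ContinuousLinearMap.id ℝ (Fin n → ℝ))).fun_add
        ((hBgc.integral_hasStrictDerivAt 0 t).hasDerivAt)
    exact h2.congr_of_eventuallyEq (Filter.Eventually.of_forall fun u => hAeq u)
  have hKtd : ∀ (t : ℝ) (y : Fin n → ℝ), DifferentiableAt ℝ (fun w => K t w) y := fun t y =>
    ((hK.differentiable (by simp)) (t, y)).comp y ((differentiableAt_const t).prodMk differentiableAt_id)
  have hφtd : ∀ (t : ℝ) (y : Fin n → ℝ), DifferentiableAt ℝ (fun w => φ t w) y := fun t y =>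
    ((hφ.differentiable one_ne_zero) (t, y)).comp y ((differentiableAt_const t).prodMk differentiableAt_id)
  have hBg_eq : ∀ t : ℝ, Bg t = (fderiv ℝ (fun y => K t y) (φ t x0)).comp
      (fderiv ℝ (fun w => φ t w) x0) := by
    intro t
    have h1 := ((hKtd t (φ t x0)).hasFDerivAt).comp x0 ((hφtd t x0).hasFDerivAt)
    have h2 : HasFDerivAt (fun x : Fin n → ℝ => K t (φ t x)) (Bg t) x0 :=
      partial_fderiv_snd (hgd (t, x0))
    exact h2.unique h1
  -- matrices
  set Mm : ℝ → Matrix (Fin n) (Fin n) ℝ :=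
    fun t i j => fderiv ℝ (fun w => φ t w) x0 (Pi.single j 1) i with hMm
  set Bmat : ℝ → Matrix (Fin n) (Fin n) ℝ :=
    fun t i j => fderiv ℝ (fun y => K t y) (φ t x0) (Pi.single j 1) i with hBm
  -- derivative of A applied to a fixed vector
  have hAv : ∀ (t : ℝ) (w : Fin n → ℝ),
      HasDerivAt (fun s => fderiv ℝ (fun y => φ s y) x0 w) (Bg t w) t := by
    intro t w
    simpa using (hAderiv t).clm_apply (hasDerivAt_const t w)
  have hBgapp : ∀ (t : ℝ) (w : Fin n → ℝ) (i : Fin n),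
      Bg t w i = ∑ k, Bmat t i k * fderiv ℝ (fun y => φ t y) x0 w k := by
    intro t w i
    rw [hBg_eq t]
    have := clm_apply_eq_sum (fderiv ℝ (fun y => K t y) (φ t x0))
      (fderiv ℝ (fun y => φ t y) x0 w) i
    simpa [mul_comm] using this
  -- entries of Mm satisfy the variational ODE
  have hMder : ∀ (t : ℝ) (i j : Fin n),
      HasDerivAt (fun s => Mm s i j) ((Bmat t * Mm t) i j) t := by
    intro t i j
    have h0 := hasDerivAt_pi.1 (hAv t (Pi.single j 1)) i
    have : Bg t (Pi.single j 1) i = (Bmat t * Mm t) i j := by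
      rw [hBgapp, Matrix.mul_apply]
    rwa [this] at h0
  have hdet : ∀ t : ℝ, HasDerivAt (fun s => (Mm s).det)
      (Matrix.trace (Bmat t) * (Mm t).det) t := by
    intro t
    have h0 := hasDerivAt_det Mm (Bmat t * Mm t) t (fun i j => hMder t i j)
    rwa [sum_det_updateColumn_mul] at h0
  -- derivative of v = A δ
  have hv : ∀ (t : ℝ) (i : Fin n),
      HasDerivAt (fun s => fderiv ℝ (fun y => φ s y) x0 δ i)
        (∑ j, Bmat t i j * fderiv ℝ (fun y => φ t y) x0 δ j) t := by
    intro t i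
    have h0 := hasDerivAt_pi.1 (hAv t δ) i
    rwa [hBgapp] at h0
  -- derivative of L = l(t, φ t x0)
  have hld : Differentiable ℝ (fun p : ℝ × (Fin n → ℝ) => l p.1 p.2) :=
    hl.differentiable one_ne_zero
  have hltd : ∀ (t : ℝ) (y : Fin n → ℝ), DifferentiableAt ℝ (fun w => l t w) y := fun t y =>
    ((hl.differentiable one_ne_zero) (t, y)).comp y
      ((differentiableAt_const t).prodMk differentiableAt_id)
  have hlid : ∀ (t : ℝ) (y : Fin n → ℝ) (i : Fin n),
      DifferentiableAt ℝ (fun w => l t w i) y := by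
    intro t y i
    have h0 := ((proj (R := ℝ) (φ := fun _ : Fin n => ℝ) i).hasFDerivAt
      (x := l t y)).comp y (hltd t y).hasFDerivAt
    exact h0.differentiableAt
  have hL : ∀ (t : ℝ) (i : Fin n),
      HasDerivAt (fun s => l s (φ s x0) i)
        (deriv (fun s => l s (φ t x0) i) t
          + ∑ j, K t (φ t x0) j * fderiv ℝ (fun w => l t w i) (φ t x0) (Pi.single j 1)) t := by
    intro t i
    have hjoint : HasDerivAt (fun s => l s (φ s x0))
        (fderiv ℝ (fun p : ℝ × (Fin n → ℝ) => l p.1 p.2) (t, φ t x0) (1, K t (φ t x0))) t :=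
      by have h := (hld (t, φ t x0)).hasFDerivAt.comp_hasDerivAt t
           ((hasDerivAt_id t).prodMk (hflow x0 t))
         exact h
    have hsplit : fderiv ℝ (fun p : ℝ × (Fin n → ℝ) => l p.1 p.2) (t, φ t x0)
          (1, K t (φ t x0))
        = fderiv ℝ (fun p : ℝ × (Fin n → ℝ) => l p.1 p.2) (t, φ t x0) (1, 0)
          + fderiv ℝ (fun p : ℝ × (Fin n → ℝ) => l p.1 p.2) (t, φ t x0) (0, K t (φ t x0)) := by
      rw [← map_add]
      congr 1
      simp
    have hpart1 : deriv (fun s => l s (φ t x0) i) t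
        = fderiv ℝ (fun p : ℝ × (Fin n → ℝ) => l p.1 p.2) (t, φ t x0) (1, 0) i :=
      (hasDerivAt_pi.1 (partial_deriv_fst (hld (t, φ t x0))) i).deriv
    have hpart2 : fderiv ℝ (fun p : ℝ × (Fin n → ℝ) => l p.1 p.2) (t, φ t x0) (0, K t (φ t x0))
        = fderiv ℝ (fun w => l t w) (φ t x0) (K t (φ t x0)) := by
      rw [(partial_fderiv_snd (hld (t, φ t x0))).fderiv]
      rfl
    have hpart3 : ∀ i : Fin n, fderiv ℝ (fun w => l t w) (φ t x0) (K t (φ t x0)) i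
        = ∑ j, K t (φ t x0) j * fderiv ℝ (fun w => l t w i) (φ t x0) (Pi.single j 1) := by
      intro i
      rw [clm_apply_eq_sum (fderiv ℝ (fun w => l t w) (φ t x0)) (K t (φ t x0)) i]
      exact Finset.sum_congr rfl fun j _ => by
        rw [fderiv_proj (hltd t (φ t x0)) i (Pi.single j 1)]
    have h0 := hasDerivAt_pi.1 hjoint i
    rw [hsplit] at h0
    simp only [Pi.add_apply] at h0
    rw [← hpart1, hpart2, hpart3 i] at h0
    exact h0
  -- rewrite hL using the transport equation
  have hBproj : ∀ (t : ℝ) (i j : Fin n),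
      Bmat t i j = fderiv ℝ (fun w => K t w i) (φ t x0) (Pi.single j 1) := by
    intro t i j
    rw [hBm]
    rw [fderiv_proj (hKtd t (φ t x0)) i (Pi.single j 1)]
  have hL' : ∀ (t : ℝ) (i : Fin n),
      HasDerivAt (fun s => l s (φ s x0) i)
        (-(∑ j, l t (φ t x0) j * Bmat t j i)
          - l t (φ t x0) i * Matrix.trace (Bmat t)) t := by
    intro t i
    have h0 := hL t i
    have htr := htrans t (φ t x0) i
    have hval : deriv (fun s => l s (φ t x0) i) t
          + ∑ j, K t (φ t x0) j * fderiv ℝ (fun w => l t w i) (φ t x0) (Pi.single j 1)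
        = -(∑ j, l t (φ t x0) j * Bmat t j i)
          - l t (φ t x0) i * Matrix.trace (Bmat t) := by
      have e1 : ∑ j, l t (φ t x0) j * Bmat t j i
          = ∑ j, l t (φ t x0) j * fderiv ℝ (fun w => K t w j) (φ t x0) (Pi.single i 1) :=
        Finset.sum_congr rfl fun j _ => by rw [hBproj]
      have e2 : Matrix.trace (Bmat t)
          = ∑ j, fderiv ℝ (fun w => K t w j) (φ t x0) (Pi.single j 1) := by
        rw [Matrix.trace]
        exact Finset.sum_congr rfl fun j _ => by rw [Matrix.diag, hBproj]
      rw [e1, e2]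
      linarith
    rwa [hval] at h0
  -- determinant translation
  have hdet_eq : ∀ t : ℝ, LinearMap.det (fderiv ℝ (fun w => φ t w) x0).toLinearMap
      = (Mm t).det := by
    intro t
    rw [← LinearMap.det_toMatrix' ((fderiv ℝ (fun w => φ t w) x0).toLinearMap)]
    congr 1
  -- the invariant has zero derivative
  have main : ∀ t : ℝ, HasDerivAt
      (fun u => (∑ i, l u (φ u x0) i * fderiv ℝ (fun w => φ u w) x0 δ i) * (Mm u).det) 0 t := by
    intro t
    have hS : HasDerivAt (fun u => ∑ i, l u (φ u x0) i * fderiv ℝ (fun w => φ u w) x0 δ i)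
        (∑ i, ((-(∑ j, l t (φ t x0) j * Bmat t j i)
              - l t (φ t x0) i * Matrix.trace (Bmat t))
            * fderiv ℝ (fun w => φ t w) x0 δ i
          + l t (φ t x0) i * (∑ j, Bmat t i j * fderiv ℝ (fun w => φ t w) x0 δ j))) t :=
      HasDerivAt.fun_sum fun i _ => (hL' t i).mul (hv t i)
    have hG := hS.mul (hdet t)
    have hzero : (∑ i, ((-(∑ j, l t (φ t x0) j * Bmat t j i)
              - l t (φ t x0) i * Matrix.trace (Bmat t))
            * fderiv ℝ (fun w => φ t w) x0 δ i
          + l t (φ t x0) i * (∑ j, Bmat t i j * fderiv ℝ (fun w => φ t w) x0 δ j)))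
            * (Mm t).det
        + (∑ i, l t (φ t x0) i * fderiv ℝ (fun w => φ t w) x0 δ i)
            * (Matrix.trace (Bmat t) * (Mm t).det) = 0 := by
      have swap : ∑ i, l t (φ t x0) i * (∑ j, Bmat t i j * fderiv ℝ (fun w => φ t w) x0 δ j)
          = ∑ i, (∑ j, l t (φ t x0) j * Bmat t j i) * fderiv ℝ (fun w => φ t w) x0 δ i := by
        simp only [Finset.mul_sum, Finset.sum_mul]
        rw [Finset.sum_comm]
        exact Finset.sum_congr rfl fun a _ => Finset.sum_congr rfl fun b _ => by ring
      rw [Finset.sum_add_distrib, swap]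
      have expand : ∑ i, ((-(∑ j, l t (φ t x0) j * Bmat t j i)
              - l t (φ t x0) i * Matrix.trace (Bmat t))
            * fderiv ℝ (fun w => φ t w) x0 δ i)
          = (∑ i, -((∑ j, l t (φ t x0) j * Bmat t j i)
              * fderiv ℝ (fun w => φ t w) x0 δ i))
            - Matrix.trace (Bmat t)
              * ∑ i, l t (φ t x0) i * fderiv ℝ (fun w => φ t w) x0 δ i := by
        rw [Finset.mul_sum, ← Finset.sum_sub_distrib]
        exact Finset.sum_congr rfl fun a _ => by ring
      rw [expand]
      ring_nf
      rw [Finset.sum_neg_distrib]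
      ring
    rw [hzero] at hG
    exact hG
  rw [hdet_eq t1, hdet_eq t2]
  exact is_const_of_deriv_eq_zero (fun u => (main u).differentiableAt)
    (fun u => (main u).deriv) t1 t2
end

section
/- Let u : ℝ³ → ℝ be smooth in (t,y,x), and suppose u satisfies the Mikhalev–Pavlov equation u_{xt} + u_{yy} = u_y u_{xx} − u_x u_{xy}. Fix λ ∈ ℝ and suppose ψ : ℝ³ → ℝ is a smooth simultaneous solution of ∂ψ/∂y + (λ + u_x) ∂ψ/∂x = 0. Then the function Φ := ∂ψ/∂t + (λ² + λ u_x − u_y) ∂ψ/∂x satisfies the same linear equation ∂Φ/∂y + (λ + u_x) ∂Φ/∂x = 0; i.e. the t-flow operator preserves the kernel of the y-flow operator. -/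
/-! Auxiliary machinery: directional derivatives on `ℝ×ℝ×ℝ`. -/

noncomputable def Dv (v : ℝ×ℝ×ℝ) (F : ℝ×ℝ×ℝ → ℝ) (p : ℝ×ℝ×ℝ) : ℝ := fderiv ℝ F p v

lemma Dv_contDiff {F : ℝ×ℝ×ℝ → ℝ} (hF : ContDiff ℝ (⊤ : ℕ∞) F) (v : ℝ×ℝ×ℝ) :
    ContDiff ℝ (⊤ : ℕ∞) (Dv v F) :=
  (hF.fderiv_right (m := (⊤ : ℕ∞)) (by simp)).clm_apply contDiff_const

lemma hasDerivAt_slice1 (F : ℝ×ℝ×ℝ → ℝ) (hF : ContDiff ℝ (⊤ : ℕ∞) F) (t y x : ℝ) :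
    HasDerivAt (fun s => F (s,y,x)) (Dv (1,0,0) F (t,y,x)) t := by
  have hline : HasDerivAt (fun s : ℝ => ((s,y,x) : ℝ×ℝ×ℝ)) (1,0,0) t := by
    simpa [Prod.mk_zero_zero] using (hasDerivAt_id t).prodMk (hasDerivAt_const t ((y,x) : ℝ×ℝ))
  exact ((hF.differentiable (by simp) (t,y,x)).hasFDerivAt).comp_hasDerivAt t hline

lemma hasDerivAt_slice2 (F : ℝ×ℝ×ℝ → ℝ) (hF : ContDiff ℝ (⊤ : ℕ∞) F) (t y x : ℝ) :
    HasDerivAt (fun s => F (t,s,x)) (Dv (0,1,0) F (t,y,x)) y := by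
  have hline : HasDerivAt (fun s : ℝ => ((t,s,x) : ℝ×ℝ×ℝ)) (0,1,0) y := by
    simpa using (hasDerivAt_const y t).prodMk ((hasDerivAt_id y).prodMk (hasDerivAt_const y x))
  exact ((hF.differentiable (by simp) (t,y,x)).hasFDerivAt).comp_hasDerivAt y hline

lemma hasDerivAt_slice3 (F : ℝ×ℝ×ℝ → ℝ) (hF : ContDiff ℝ (⊤ : ℕ∞) F) (t y x : ℝ) :
    HasDerivAt (fun s => F (t,y,s)) (Dv (0,0,1) F (t,y,x)) x := by
  have hline : HasDerivAt (fun s : ℝ => ((t,y,s) : ℝ×ℝ×ℝ)) (0,0,1) x := by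
    simpa using (hasDerivAt_const x t).prodMk ((hasDerivAt_const x y).prodMk (hasDerivAt_id x))
  exact ((hF.differentiable (by simp) (t,y,x)).hasFDerivAt).comp_hasDerivAt x hline

lemma Dv_comm {F : ℝ×ℝ×ℝ → ℝ} (hF : ContDiff ℝ (⊤ : ℕ∞) F) (v w p : ℝ×ℝ×ℝ) :
    Dv v (Dv w F) p = Dv w (Dv v F) p := by
  have hd : ∀ q, HasFDerivAt F (fderiv ℝ F q) q := fun q =>
    (hF.differentiable (by simp) q).hasFDerivAt
  have hdiff : Differentiable ℝ (fderiv ℝ F) :=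
    (hF.fderiv_right (m := (⊤ : ℕ∞)) (by simp)).differentiable (by simp)
  have hd2 : HasFDerivAt (fderiv ℝ F) (fderiv ℝ (fderiv ℝ F) p) p := (hdiff p).hasFDerivAt
  have key : ∀ a b : ℝ×ℝ×ℝ, Dv a (Dv b F) p = fderiv ℝ (fderiv ℝ F) p a b := by
    intro a b
    have h := ((ContinuousLinearMap.apply ℝ ℝ b).hasFDerivAt (x := fderiv ℝ F p)).comp p hd2
    unfold Dv
    rw [show (fun q : ℝ×ℝ×ℝ => (fderiv ℝ F q) b)
        = (⇑((ContinuousLinearMap.apply ℝ ℝ) b) ∘ fderiv ℝ F) from rfl, h.fderiv]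
    rfl
  rw [key, key]
  exact second_derivative_symmetric hd hd2 v w

lemma pt_eqD {f : ℝ→ℝ→ℝ→ℝ} {F : ℝ×ℝ×ℝ→ℝ} (hF : ContDiff ℝ (⊤ : ℕ∞) F)
    (h : ∀ a b c : ℝ, f a b c = F (a,b,c)) (t y x : ℝ) :
    pt f t y x = Dv (1,0,0) F (t,y,x) := by
  unfold pt
  rw [show (fun s => f s y x) = fun s => F (s,y,x) from funext fun s => h s y x]
  exact (hasDerivAt_slice1 F hF t y x).deriv

lemma py_eqD {f : ℝ→ℝ→ℝ→ℝ} {F : ℝ×ℝ×ℝ→ℝ} (hF : ContDiff ℝ (⊤ : ℕ∞) F)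
    (h : ∀ a b c : ℝ, f a b c = F (a,b,c)) (t y x : ℝ) :
    py f t y x = Dv (0,1,0) F (t,y,x) := by
  unfold py
  rw [show (fun s => f t s x) = fun s => F (t,s,x) from funext fun s => h t s x]
  exact (hasDerivAt_slice2 F hF t y x).deriv

lemma px_eqD {f : ℝ→ℝ→ℝ→ℝ} {F : ℝ×ℝ×ℝ→ℝ} (hF : ContDiff ℝ (⊤ : ℕ∞) F)
    (h : ∀ a b c : ℝ, f a b c = F (a,b,c)) (t y x : ℝ) :
    px f t y x = Dv (0,0,1) F (t,y,x) := by
  unfold px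
  rw [show (fun s => f t y s) = fun s => F (t,y,s) from funext fun s => h t y s]
  exact (hasDerivAt_slice3 F hF t y x).deriv

/-- If `u` solves the Mikhalev–Pavlov equation and `ψ` lies in the kernel of
`A_y = ∂/∂y + (λ + u_x) ∂/∂x`, then `Φ := A'_t ψ = (∂/∂t + (λ² + λu_x − u_y)∂/∂x)ψ`
also lies in the kernel of `A_y`: the `t`-flow operator preserves `ker A_y`. -/
theorem t_flow_preserves_ker_y_flow (u : ℝ → ℝ → ℝ → ℝ)
    (hu : ContDiff ℝ (⊤ : ℕ∞) (fun p : ℝ × ℝ × ℝ => u p.1 p.2.1 p.2.2))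
    (hMP : ∀ t y x : ℝ,
      px (pt u) t y x + py (py u) t y x =
        py u t y x * px (px u) t y x - px u t y x * px (py u) t y x)
    (lam : ℝ) (ψ : ℝ → ℝ → ℝ → ℝ)
    (hψ : ContDiff ℝ (⊤ : ℕ∞) (fun p : ℝ × ℝ × ℝ => ψ p.1 p.2.1 p.2.2))
    (hker : ∀ t y x : ℝ,
      py ψ t y x + (lam + px u t y x) * px ψ t y x = 0) :
    ∀ t y x : ℝ,
      py (fun t y x =>
            pt ψ t y x + (lam ^ 2 + lam * px u t y x - py u t y x) * px ψ t y x) t y x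
        + (lam + px u t y x) *
            px (fun t y x =>
              pt ψ t y x + (lam ^ 2 + lam * px u t y x - py u t y x) * px ψ t y x) t y x
        = 0 := by
  intro t y x
  set U : ℝ×ℝ×ℝ → ℝ := fun p => u p.1 p.2.1 p.2.2 with hUdef
  set Ψ : ℝ×ℝ×ℝ → ℝ := fun p => ψ p.1 p.2.1 p.2.2 with hΨdef
  -- first-order translations
  have hux : ∀ a b c : ℝ, px u a b c = Dv (0,0,1) U (a,b,c) :=
    fun a b c => px_eqD hu (fun _ _ _ => rfl) a b c
  have huy : ∀ a b c : ℝ, py u a b c = Dv (0,1,0) U (a,b,c) :=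
    fun a b c => py_eqD hu (fun _ _ _ => rfl) a b c
  have hut : ∀ a b c : ℝ, pt u a b c = Dv (1,0,0) U (a,b,c) :=
    fun a b c => pt_eqD hu (fun _ _ _ => rfl) a b c
  have hψx : ∀ a b c : ℝ, px ψ a b c = Dv (0,0,1) Ψ (a,b,c) :=
    fun a b c => px_eqD hψ (fun _ _ _ => rfl) a b c
  have hψy : ∀ a b c : ℝ, py ψ a b c = Dv (0,1,0) Ψ (a,b,c) :=
    fun a b c => py_eqD hψ (fun _ _ _ => rfl) a b c
  have hψt : ∀ a b c : ℝ, pt ψ a b c = Dv (1,0,0) Ψ (a,b,c) :=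
    fun a b c => pt_eqD hψ (fun _ _ _ => rfl) a b c
  -- second-order translations for u
  have hxt : ∀ a b c : ℝ, px (pt u) a b c = Dv (0,0,1) (Dv (1,0,0) U) (a,b,c) :=
    fun a b c => px_eqD (Dv_contDiff hu _) hut a b c
  have hyy : ∀ a b c : ℝ, py (py u) a b c = Dv (0,1,0) (Dv (0,1,0) U) (a,b,c) :=
    fun a b c => py_eqD (Dv_contDiff hu _) huy a b c
  have hxx : ∀ a b c : ℝ, px (px u) a b c = Dv (0,0,1) (Dv (0,0,1) U) (a,b,c) :=
    fun a b c => px_eqD (Dv_contDiff hu _) hux a b c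
  have hxy : ∀ a b c : ℝ, px (py u) a b c = Dv (0,0,1) (Dv (0,1,0) U) (a,b,c) :=
    fun a b c => px_eqD (Dv_contDiff hu _) huy a b c
  -- translated Mikhalev–Pavlov equation
  have hMP' : Dv (0,0,1) (Dv (1,0,0) U) (t,y,x) + Dv (0,1,0) (Dv (0,1,0) U) (t,y,x) =
      Dv (0,1,0) U (t,y,x) * Dv (0,0,1) (Dv (0,0,1) U) (t,y,x) -
      Dv (0,0,1) U (t,y,x) * Dv (0,0,1) (Dv (0,1,0) U) (t,y,x) := by
    have h := hMP t y x
    rwa [hxt, hyy, huy, hxx, hux, hxy] at h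
  -- translated kernel equation, valid everywhere
  have hK0 : ∀ q : ℝ×ℝ×ℝ, Dv (0,1,0) Ψ q + (lam + Dv (0,0,1) U q) * Dv (0,0,1) Ψ q = 0 := by
    rintro ⟨a,b,c⟩
    have h := hker a b c
    rwa [hψy, hux, hψx] at h
  -- t-derivative of the kernel equation
  have hE2 : Dv (1,0,0) (Dv (0,1,0) Ψ) (t,y,x) +
      ((0 + Dv (1,0,0) (Dv (0,0,1) U) (t,y,x)) * Dv (0,0,1) Ψ (t,y,x) +
        (lam + Dv (0,0,1) U (t,y,x)) * Dv (1,0,0) (Dv (0,0,1) Ψ) (t,y,x)) = 0 := by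
    have hslice : HasDerivAt
        (fun s => Dv (0,1,0) Ψ (s,y,x) + (lam + Dv (0,0,1) U (s,y,x)) * Dv (0,0,1) Ψ (s,y,x))
        (Dv (1,0,0) (Dv (0,1,0) Ψ) (t,y,x) +
          ((0 + Dv (1,0,0) (Dv (0,0,1) U) (t,y,x)) * Dv (0,0,1) Ψ (t,y,x) +
            (lam + Dv (0,0,1) U (t,y,x)) * Dv (1,0,0) (Dv (0,0,1) Ψ) (t,y,x))) t :=
      (hasDerivAt_slice1 _ (Dv_contDiff hψ _) t y x).add
        (((hasDerivAt_const t lam).add (hasDerivAt_slice1 _ (Dv_contDiff hu _) t y x)).mul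
          (hasDerivAt_slice1 _ (Dv_contDiff hψ _) t y x))
    have h := hslice.deriv
    rw [show (fun s => Dv (0,1,0) Ψ (s,y,x) + (lam + Dv (0,0,1) U (s,y,x)) * Dv (0,0,1) Ψ (s,y,x))
        = fun _ => (0:ℝ) from funext fun s => hK0 (s,y,x)] at h
    simpa using h.symm
  -- x-derivative of the kernel equation
  have hE3 : Dv (0,0,1) (Dv (0,1,0) Ψ) (t,y,x) +
      ((0 + Dv (0,0,1) (Dv (0,0,1) U) (t,y,x)) * Dv (0,0,1) Ψ (t,y,x) +
        (lam + Dv (0,0,1) U (t,y,x)) * Dv (0,0,1) (Dv (0,0,1) Ψ) (t,y,x)) = 0 := by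
    have hslice : HasDerivAt
        (fun s => Dv (0,1,0) Ψ (t,y,s) + (lam + Dv (0,0,1) U (t,y,s)) * Dv (0,0,1) Ψ (t,y,s))
        (Dv (0,0,1) (Dv (0,1,0) Ψ) (t,y,x) +
          ((0 + Dv (0,0,1) (Dv (0,0,1) U) (t,y,x)) * Dv (0,0,1) Ψ (t,y,x) +
            (lam + Dv (0,0,1) U (t,y,x)) * Dv (0,0,1) (Dv (0,0,1) Ψ) (t,y,x))) x :=
      (hasDerivAt_slice3 _ (Dv_contDiff hψ _) t y x).add
        (((hasDerivAt_const x lam).add (hasDerivAt_slice3 _ (Dv_contDiff hu _) t y x)).mul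
          (hasDerivAt_slice3 _ (Dv_contDiff hψ _) t y x))
    have h := hslice.deriv
    rw [show (fun s => Dv (0,1,0) Ψ (t,y,s) + (lam + Dv (0,0,1) U (t,y,s)) * Dv (0,0,1) Ψ (t,y,s))
        = fun _ => (0:ℝ) from funext fun s => hK0 (t,y,s)] at h
    simpa using h.symm
  -- y-derivative of Φ
  have hyΦ : py (fun t y x =>
        pt ψ t y x + (lam ^ 2 + lam * px u t y x - py u t y x) * px ψ t y x) t y x =
      Dv (0,1,0) (Dv (1,0,0) Ψ) (t,y,x) +
        ((0 + lam * Dv (0,1,0) (Dv (0,0,1) U) (t,y,x) - Dv (0,1,0) (Dv (0,1,0) U) (t,y,x)) *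
            Dv (0,0,1) Ψ (t,y,x) +
          (lam ^ 2 + lam * Dv (0,0,1) U (t,y,x) - Dv (0,1,0) U (t,y,x)) *
            Dv (0,1,0) (Dv (0,0,1) Ψ) (t,y,x)) := by
    show deriv (fun s => pt ψ t s x + (lam ^ 2 + lam * px u t s x - py u t s x) * px ψ t s x) y = _
    rw [show (fun s => pt ψ t s x + (lam ^ 2 + lam * px u t s x - py u t s x) * px ψ t s x)
        = fun s => Dv (1,0,0) Ψ (t,s,x) +
            (lam ^ 2 + lam * Dv (0,0,1) U (t,s,x) - Dv (0,1,0) U (t,s,x)) * Dv (0,0,1) Ψ (t,s,x)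
        from funext fun s => by rw [hψt, hux, huy, hψx]]
    exact ((hasDerivAt_slice2 _ (Dv_contDiff hψ _) t y x).add
      ((((hasDerivAt_const y (lam ^ 2)).add
          ((hasDerivAt_slice2 _ (Dv_contDiff hu _) t y x).const_mul lam)).sub
        (hasDerivAt_slice2 _ (Dv_contDiff hu _) t y x)).mul
        (hasDerivAt_slice2 _ (Dv_contDiff hψ _) t y x))).deriv
  -- x-derivative of Φ
  have hxΦ : px (fun t y x =>
        pt ψ t y x + (lam ^ 2 + lam * px u t y x - py u t y x) * px ψ t y x) t y x =
      Dv (0,0,1) (Dv (1,0,0) Ψ) (t,y,x) +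
        ((0 + lam * Dv (0,0,1) (Dv (0,0,1) U) (t,y,x) - Dv (0,0,1) (Dv (0,1,0) U) (t,y,x)) *
            Dv (0,0,1) Ψ (t,y,x) +
          (lam ^ 2 + lam * Dv (0,0,1) U (t,y,x) - Dv (0,1,0) U (t,y,x)) *
            Dv (0,0,1) (Dv (0,0,1) Ψ) (t,y,x)) := by
    show deriv (fun s => pt ψ t y s + (lam ^ 2 + lam * px u t y s - py u t y s) * px ψ t y s) x = _
    rw [show (fun s => pt ψ t y s + (lam ^ 2 + lam * px u t y s - py u t y s) * px ψ t y s)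
        = fun s => Dv (1,0,0) Ψ (t,y,s) +
            (lam ^ 2 + lam * Dv (0,0,1) U (t,y,s) - Dv (0,1,0) U (t,y,s)) * Dv (0,0,1) Ψ (t,y,s)
        from funext fun s => by rw [hψt, hux, huy, hψx]]
    exact ((hasDerivAt_slice3 _ (Dv_contDiff hψ _) t y x).add
      ((((hasDerivAt_const x (lam ^ 2)).add
          ((hasDerivAt_slice3 _ (Dv_contDiff hu _) t y x).const_mul lam)).sub
        (hasDerivAt_slice3 _ (Dv_contDiff hu _) t y x)).mul
        (hasDerivAt_slice3 _ (Dv_contDiff hψ _) t y x))).deriv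
  rw [hyΦ, hxΦ, hux]
  -- canonicalize mixed partials using Clairaut
  rw [Dv_comm hψ (0,1,0) (1,0,0) (t,y,x), Dv_comm hψ (0,1,0) (0,0,1) (t,y,x),
      Dv_comm hψ (0,0,1) (1,0,0) (t,y,x), Dv_comm hu (0,1,0) (0,0,1) (t,y,x)]
  rw [Dv_comm hu (0,0,1) (1,0,0) (t,y,x)] at hMP'
  linear_combination hE2 +
    (lam ^ 2 + lam * Dv (0,0,1) U (t,y,x) - Dv (0,1,0) U (t,y,x)) * hE3 -
    Dv (0,0,1) Ψ (t,y,x) * hMP'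
end
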